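/- arXiv:1806.03614 — 5 statements merged into one kernel-verified Lean document; each statement's English description precedes it below -/
import Mathlib

section
/- Let G be a finite abelian group, D(G) its generalized dihedral group (assumed non-abelian), and \Gamma the commuting graph of D(G). Then two distinct vertices u = (g, \epsilon) and v = (h, \delta) are adjacent in \Gamma if and only if one of the following holds: (i) \epsilon = 1 and g^2 = e; (ii) \delta = 1 and h^2 = e; (iii) \epsilon = \delta = 1; (iv) \epsilon = \delta = -1 and g^2 = h^2. (This expresses the decomposition \Gamma = K_{2^r} \vee (K_{n-2^r} \cup (n/2^r) K_{2^r}).) -/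
/-- The generalized dihedral group `D(G) = G ⋊ C₂`, with `⟨g, false⟩`
representing `(g, 1)` and `⟨g, true⟩` representing `(g, -1)`.
Multiplication is `(g₁, c₁)(g₂, c₂) = (g₁ g₂^{c₁}, c₁ c₂)`, i.e. `-1` acts by inversion. -/
@[ext]
structure GenDihedral (G : Type) where
  g : G
  b : Bool
  deriving DecidableEq

namespace GenDihedral

variable {G : Type} [CommGroup G]

instance : Mul (GenDihedral G) :=
  ⟨fun a c => ⟨a.g * (if a.b then c.g⁻¹ else c.g), xor a.b c.b⟩⟩

instance : One (GenDihedral G) := ⟨⟨1, false⟩⟩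

instance : Inv (GenDihedral G) := ⟨fun a => ⟨if a.b then a.g else a.g⁻¹, a.b⟩⟩

theorem mul_def (a c : GenDihedral G) :
    a * c = ⟨a.g * (if a.b then c.g⁻¹ else c.g), xor a.b c.b⟩ := rfl

theorem one_def : (1 : GenDihedral G) = ⟨1, false⟩ := rfl

theorem inv_def (a : GenDihedral G) : a⁻¹ = ⟨if a.b then a.g else a.g⁻¹, a.b⟩ := rfl

instance : Group (GenDihedral G) where
  mul_assoc a c d := by
    obtain ⟨g₁, b₁⟩ := a; obtain ⟨g₂, b₂⟩ := c; obtain ⟨g₃, b₃⟩ := d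
    cases b₁ <;> cases b₂ <;> cases b₃ <;>
      simp [mul_def, mul_assoc, mul_comm, mul_left_comm, mul_inv, inv_inv]
  one_mul a := by obtain ⟨g, b⟩ := a; cases b <;> simp [mul_def, one_def]
  mul_one a := by obtain ⟨g, b⟩ := a; cases b <;> simp [mul_def, one_def]
  inv_mul_cancel a := by
    obtain ⟨g, b⟩ := a; cases b <;> simp [mul_def, one_def, inv_def]

instance [Fintype G] : Fintype (GenDihedral G) :=
  Fintype.ofEquiv (G × Bool)
    ⟨fun p => ⟨p.1, p.2⟩, fun x => (x.g, x.b), fun _ => rfl, fun _ => rfl⟩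

instance [DecidableEq G] (a c : GenDihedral G) : Decidable (Commute a c) :=
  decidable_of_iff (a * c = c * a) Iff.rfl

end GenDihedral

namespace GenDihedral

def commGraph (G : Type) [CommGroup G] : SimpleGraph (GenDihedral G) where
  Adj u v := u ≠ v ∧ u * v = v * u
  symm := ⟨fun _ _ h => ⟨h.1.symm, h.2.symm⟩⟩
  loopless := ⟨fun _ h => h.1 rfl⟩

instance {G : Type} [CommGroup G] [DecidableEq G] : DecidableRel (commGraph G).Adj :=
  fun _ _ => instDecidableAnd

end GenDihedral

theorem mul_eq_mul_inv_iff_sq_eq_one {G : Type} [CommGroup G] (g h : G) :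
    g * h = h * g⁻¹ ↔ g ^ 2 = 1 := by
  rw [mul_comm g, mul_right_inj, eq_inv_iff_mul_eq_one, sq]

theorem mul_inv_eq_mul_inv_iff_sq_eq_sq {G : Type} [CommGroup G] (g h : G) :
    g * h⁻¹ = h * g⁻¹ ↔ g ^ 2 = h ^ 2 := by
  rw [← div_eq_mul_inv, ← div_eq_mul_inv, div_eq_div_iff_mul_eq_mul, sq, sq]

namespace GenDihedral

variable {G : Type} [CommGroup G]

theorem commute_mk_false_mk_false (g h : G) :
    Commute (⟨g, false⟩ : GenDihedral G) ⟨h, false⟩ := by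
  simp [Commute, SemiconjBy, mul_def, mul_comm]

theorem commute_mk_false_mk_true_iff (g h : G) :
    Commute (⟨g, false⟩ : GenDihedral G) ⟨h, true⟩ ↔ g ^ 2 = 1 := by
  simp [Commute, SemiconjBy, mul_def, mul_eq_mul_inv_iff_sq_eq_one]

theorem commute_mk_true_mk_true_iff (g h : G) :
    Commute (⟨g, true⟩ : GenDihedral G) ⟨h, true⟩ ↔ g ^ 2 = h ^ 2 := by
  simp [Commute, SemiconjBy, mul_def, mul_inv_eq_mul_inv_iff_sq_eq_sq]

theorem commute_iff (u v : GenDihedral G) :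
    Commute u v ↔
      (u.b = false ∧ u.g ^ 2 = 1) ∨ (v.b = false ∧ v.g ^ 2 = 1) ∨
      (u.b = false ∧ v.b = false) ∨ (u.b = true ∧ v.b = true ∧ u.g ^ 2 = v.g ^ 2) := by
  obtain ⟨g, _ | _⟩ := u <;> obtain ⟨h, _ | _⟩ := v
  · simp [commute_mk_false_mk_false]
  · simp [commute_mk_false_mk_true_iff]
  · simp [Commute.symm_iff.trans (commute_mk_false_mk_true_iff h g)]
  · simp [commute_mk_true_mk_true_iff]

end GenDihedral

open GenDihedral in
theorem stmt6_general {G : Type} [CommGroup G]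
    (u v : GenDihedral G) (huv : u ≠ v) :
    (commGraph G).Adj u v ↔
      (u.b = false ∧ u.g ^ 2 = 1) ∨ (v.b = false ∧ v.g ^ 2 = 1) ∨
      (u.b = false ∧ v.b = false) ∨ (u.b = true ∧ v.b = true ∧ u.g ^ 2 = v.g ^ 2) :=
  (and_iff_right huv).trans (commute_iff u v)

open GenDihedral in
/-- Structure of the commuting graph of a non-abelian `D(G)`
(`Γ = K_{2^r} ∨ (K_{n-2^r} ∪ (n/2^r) K_{2^r})`): two distinct vertices `u = (g, ε)`,
`v = (h, δ)` are adjacent iff `u` is central, or `v` is central, or both lie in `G₁`,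
or both lie in `G₂` with `g² = h²`. -/
theorem stmt6 {G : Type} [CommGroup G] [Fintype G] (hna : ∃ g : G, g ^ 2 ≠ 1)
    (u v : GenDihedral G) (huv : u ≠ v) :
    (commGraph G).Adj u v ↔
      (u.b = false ∧ u.g ^ 2 = 1) ∨ (v.b = false ∧ v.g ^ 2 = 1) ∨
      (u.b = false ∧ v.b = false) ∨ (u.b = true ∧ v.b = true ∧ u.g ^ 2 = v.g ^ 2) :=
  stmt6_general u v huv
end

section
/- Let G be a finite abelian group of order n, D(G) its generalized dihedral group (assumed non-abelian), \Gamma the commuting graph of D(G), and z = |{g \in G : g^2 = e}|. Then the number of edges of \Gamma satisfies 2|E(\Gamma)| = 3nz + n(n-2); equivalently, with z = 2^r, |E(\Gamma)| = 3n·2^{r-1} + n(n-2)/2. -/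
open Finset

theorem card_filter_sq_eq_sq {G : Type*} [CommGroup G] [Fintype G] [DecidableEq G] (h : G) :
    #{k : G | k ^ 2 = h ^ 2} = #{k : G | k ^ 2 = 1} :=
  MonoidHom.card_fiber_eq_of_mem_range (powMonoidHom 2 : G →* G) ⟨h, rfl⟩ ⟨1, one_pow 2⟩

namespace GenDihedral

theorem sum_eq_sum_mk_false_add_sum_mk_true {G : Type} [Fintype G] {M : Type*}
    [AddCommMonoid M] (f : GenDihedral G → M) :
    ∑ v, f v = ∑ g, f ⟨g, false⟩ + ∑ g, f ⟨g, true⟩ := by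
  let e : G × Bool ≃ GenDihedral G :=
    ⟨fun p => ⟨p.1, p.2⟩, fun x => (x.g, x.b), fun _ => rfl, fun _ => rfl⟩
  rw [← e.sum_comp, Fintype.sum_prod_type, ← sum_add_distrib]
  exact sum_congr rfl fun g _ => by rw [Fintype.sum_bool, add_comm]; rfl

variable {G : Type} [CommGroup G]

theorem mk_false_mul_comm (g k : G) :
    (⟨g, false⟩ * ⟨k, false⟩ : GenDihedral G) = ⟨k, false⟩ * ⟨g, false⟩ := by
  simp [mul_def, mul_comm]

theorem mk_false_mul_mk_true_comm_iff (g k : G) :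
    (⟨g, false⟩ * ⟨k, true⟩ : GenDihedral G) = ⟨k, true⟩ * ⟨g, false⟩ ↔ g ^ 2 = 1 := by
  simp only [mul_def, mk.injEq, Bool.false_eq_true, if_true, if_false, Bool.false_xor,
    Bool.xor_false, and_true]
  rw [mul_comm g k, mul_right_inj, eq_inv_iff_mul_eq_one, sq]

theorem mk_true_mul_comm_iff (h k : G) :
    (⟨h, true⟩ * ⟨k, true⟩ : GenDihedral G) = ⟨k, true⟩ * ⟨h, true⟩ ↔ k ^ 2 = h ^ 2 := by
  simp only [mul_def, mk.injEq, if_true, and_true]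
  rw [← div_eq_mul_inv, ← div_eq_mul_inv, div_eq_div_iff_mul_eq_mul, sq, sq, eq_comm]

variable [Fintype G] [DecidableEq G]

theorem degree_commGraph (v : GenDihedral G) :
    (commGraph G).degree v
      = #{g | (commGraph G).Adj v ⟨g, false⟩} + #{g | (commGraph G).Adj v ⟨g, true⟩} := by
  rw [← SimpleGraph.card_neighborFinset_eq_degree, SimpleGraph.neighborFinset_eq_filter,
    card_filter, sum_eq_sum_mk_false_add_sum_mk_true, card_filter, card_filter]

theorem degree_commGraph_mk_false (g : G) :
    (commGraph G).degree ⟨g, false⟩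
      = (Fintype.card G - 1) + if g ^ 2 = 1 then Fintype.card G else 0 := by
  have hrot : ({k | (commGraph G).Adj ⟨g, false⟩ ⟨k, false⟩} : Finset G) = univ.erase g := by
    ext k
    simp [commGraph, mk_false_mul_comm, eq_comm]
  have hrefl : ({k | (commGraph G).Adj ⟨g, false⟩ ⟨k, true⟩} : Finset G)
      = if g ^ 2 = 1 then univ else ∅ := by
    ext k
    split_ifs <;> simp_all [commGraph, mk_false_mul_mk_true_comm_iff]
  rw [degree_commGraph, hrot, hrefl, card_erase_of_mem (mem_univ g), card_univ]
  split_ifs <;> simp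

theorem degree_commGraph_mk_true (h : G) :
    (commGraph G).degree ⟨h, true⟩ = #{g : G | g ^ 2 = 1} + (#{g : G | g ^ 2 = 1} - 1) := by
  have hrot : ({k | (commGraph G).Adj ⟨h, true⟩ ⟨k, false⟩} : Finset G)
      = ({k : G | k ^ 2 = 1} : Finset G) := by
    ext k
    simp [commGraph, eq_comm (a := (⟨h, true⟩ * _ : GenDihedral G)),
      mk_false_mul_mk_true_comm_iff]
  have hrefl : ({k | (commGraph G).Adj ⟨h, true⟩ ⟨k, true⟩} : Finset G)
      = ({k | k ^ 2 = h ^ 2} : Finset G).erase h := by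
    ext k
    simp [commGraph, mk_true_mul_comm_iff, eq_comm]
  rw [degree_commGraph, hrot, hrefl, card_erase_of_mem (by simp), card_filter_sq_eq_sq]

end GenDihedral

open GenDihedral in
/-- The number of edges of the commuting graph of a non-abelian `D(G)`, where
`n = |G|` and `z = |{g : g² = e}|`, satisfies `2|E(Γ)| = 3nz + n(n-2)`. -/
theorem stmt8 {G : Type} [CommGroup G] [Fintype G] [DecidableEq G]
    (hna : ∃ g : G, g ^ 2 ≠ 1) (n z : ℕ) (hn : n = Fintype.card G)
    (hz : z = (Finset.univ.filter fun g : G => g ^ 2 = 1).card) :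
    2 * (commGraph G).edgeFinset.card = 3 * n * z + n * (n - 2) := by
  obtain ⟨g₀, hg₀⟩ := hna
  have hn2 : 2 ≤ n :=
    hn ▸ Fintype.one_lt_card_iff_nontrivial.mpr ⟨g₀, 1, by rintro rfl; simp at hg₀⟩
  have hz1 : 1 ≤ z := hz ▸ card_pos.mpr ⟨1, by simp⟩
  have hrot : ∑ g : G, (commGraph G).degree ⟨g, false⟩ = n * (n - 1) + z * n := by
    simp only [degree_commGraph_mk_false, sum_add_distrib, ← sum_filter, sum_const, card_univ,
      smul_eq_mul, hn, hz]
  have hrefl : ∑ g : G, (commGraph G).degree ⟨g, true⟩ = n * (z + (z - 1)) := by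
    simp only [degree_commGraph_mk_true, sum_const, card_univ, smul_eq_mul, hn, hz]
  rw [← (commGraph G).sum_degrees_eq_twice_card_edges, sum_eq_sum_mk_false_add_sum_mk_true,
    hrot, hrefl]
  zify [hz1, hn2, hn2.trans' one_le_two]
  ring
end

section
/- Let G be a finite abelian group of order n, D(G) its generalized dihedral group (assumed non-abelian), and \Gamma the commuting graph of D(G). Then the chromatic number of \Gamma equals n. -/
namespace GenDihedral

open scoped Classical

variable {G : Type} [CommGroup G]

theorem commute_rotation_rotation (a c : G) :
    Commute (⟨a, false⟩ : GenDihedral G) ⟨c, false⟩ := by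
  simp [Commute, SemiconjBy, mul_def, mul_comm]

theorem commute_rotation_reflection_iff (a c : G) :
    Commute (⟨a, false⟩ : GenDihedral G) ⟨c, true⟩ ↔ a ^ 2 = 1 := by
  simp [Commute, SemiconjBy, mul_def, mul_comm c, pow_two, mul_eq_one_iff_eq_inv]

theorem commute_reflection_reflection_iff (a c : G) :
    Commute (⟨a, true⟩ : GenDihedral G) ⟨c, true⟩ ↔ a ^ 2 = c ^ 2 := by
  simp [Commute, SemiconjBy, mul_def, ← div_eq_mul_inv, div_eq_div_iff_mul_eq_mul, pow_two]

noncomputable def color (g₀ : G) (x : GenDihedral G) : G :=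
  if x.b ∧ x.g ^ 2 = 1 then x.g * g₀ else x.g

theorem color_reflection_sq_ne_one {g₀ : G} (hg₀ : g₀ ^ 2 ≠ 1) (c : G) :
    color g₀ ⟨c, true⟩ ^ 2 ≠ 1 := by
  by_cases hc : c ^ 2 = 1 <;> simp [color, hc, mul_pow, hg₀]

theorem color_rotation_ne_color_reflection {g₀ : G} (hg₀ : g₀ ^ 2 ≠ 1) {a c : G}
    (hac : Commute (⟨a, false⟩ : GenDihedral G) ⟨c, true⟩) :
    color g₀ ⟨a, false⟩ ≠ color g₀ ⟨c, true⟩ := by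
  intro h
  apply color_reflection_sq_ne_one hg₀ c
  rw [← h]
  simpa [color] using (commute_rotation_reflection_iff a c).mp hac

theorem color_reflection_injective_of_commute {g₀ : G} {a c : G}
    (hac : Commute (⟨a, true⟩ : GenDihedral G) ⟨c, true⟩)
    (h : color g₀ ⟨a, true⟩ = color g₀ ⟨c, true⟩) : a = c := by
  have hsq := (commute_reflection_reflection_iff a c).mp hac
  by_cases ha : a ^ 2 = 1 <;> simpa [color, ha, ← hsq] using h

noncomputable def commGraphColoring {g₀ : G} (hg₀ : g₀ ^ 2 ≠ 1) : (commGraph G).Coloring G :=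
  SimpleGraph.Coloring.mk (color g₀) <| by
    rintro ⟨a, _ | _⟩ ⟨c, _ | _⟩ ⟨hne, hcomm⟩
    · simpa [color, GenDihedral.ext_iff] using hne
    · exact color_rotation_ne_color_reflection hg₀ hcomm
    · exact (color_rotation_ne_color_reflection hg₀ hcomm.symm).symm
    · exact fun h => hne (by rw [color_reflection_injective_of_commute hcomm h])

def rotationHom : (⊤ : SimpleGraph G) →g commGraph G where
  toFun a := ⟨a, false⟩
  map_rel' {a c} hne := ⟨by simpa using hne, commute_rotation_rotation a c⟩

end GenDihedral

open GenDihedral in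
/-- The chromatic number of the commuting graph of a non-abelian `D(G)` equals `n = |G|`. -/
theorem stmt9 {G : Type} [CommGroup G] [Fintype G] (hna : ∃ g : G, g ^ 2 ≠ 1) :
    (commGraph G).chromaticNumber = (Fintype.card G : ℕ∞) := by
  obtain ⟨g₀, hg₀⟩ := hna
  apply le_antisymm
  · exact (commGraphColoring hg₀).colorable.chromaticNumber_le
  · rw [← SimpleGraph.chromaticNumber_top]
    exact SimpleGraph.chromaticNumber_mono_of_hom rotationHom
end

section
/- Let G be a finite abelian group of order n, D(G) its generalized dihedral group (assumed non-abelian), \Gamma the commuting graph of D(G), and z = |{g \in G : g^2 = e}|. For every vertex v \notin Z(D(G)) (i.e., v = (g,1) with g^2 \ne e, or v = (g,-1)), the detour eccentricity of v in \Gamma equals 2n - 1 if n/z \le z, and equals n + z^2 - 1 if n/z > z. -/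
/-- The detour eccentricity of a vertex `v` in a graph `Γ`: the maximum length of a
simple path in `Γ` starting at `v` (equivalently, the maximum over all vertices `u`
of the detour distance `d_D(v, u)`, the length of a longest simple `v-u` path). -/
noncomputable def detourEcc {V : Type} (Γ : SimpleGraph V) (v : V) : ℕ :=
  sSup {n : ℕ | ∃ u : V, ∃ p : Γ.Walk v u, p.IsPath ∧ p.length = n}

namespace SimpleGraph

variable {V : Type*} [DecidableEq V] {Γ : SimpleGraph V}

theorem IsClique.exists_isChain_cons {Q : Finset V} (hQ : Γ.IsClique (Q : Set V)) {c : V}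
    (hc : c ∈ Q) :
    ∃ t : List V, (c :: t).IsChain Γ.Adj ∧ (c :: t).Nodup ∧ (c :: t).toFinset = Q := by
  have hnd : (c :: (Q.erase c).toList).Nodup := by simp [Finset.nodup_toList]
  refine ⟨(Q.erase c).toList, List.Pairwise.isChain (hnd.pairwise_of_forall_ne ?_), hnd, ?_⟩
  · intro x hx y hy hxy
    simp only [List.mem_cons, Finset.mem_toList, Finset.mem_erase] at hx hy
    exact hQ (by rcases hx with rfl | hx <;> simp [*])
      (by rcases hy with rfl | hy <;> simp [*]) hxy
  · ext x; by_cases hxc : x = c <;> simp [hxc, hc]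

theorem exists_isChain_append_of_cliques {l : List V} (hl : l.IsChain Γ.Adj) (hnd : l.Nodup)
    {Qs : List (Finset V)}
    (hQs : ∀ Q ∈ Qs, Γ.IsClique (Q : Set V) ∧ ∃ c ∈ Q, Γ.IsUniversal c)
    (hdisj : Qs.Pairwise Disjoint) (hlQs : ∀ Q ∈ Qs, ∀ x ∈ l, x ∉ Q) :
    ∃ t, (l ++ t).IsChain Γ.Adj ∧ (l ++ t).Nodup ∧ t.length = (Qs.map Finset.card).sum := by
  induction Qs generalizing l with
  | nil => exact ⟨[], by simpa using hl, by simpa using hnd, rfl⟩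
  | cons Q Qs ih =>
    obtain ⟨⟨hQ, c, hc, hcu⟩, hQs⟩ := List.forall_mem_cons.mp hQs
    obtain ⟨hQQs, hdisj⟩ := List.pairwise_cons.mp hdisj
    obtain ⟨hlQ, hlQs⟩ := List.forall_mem_cons.mp hlQs
    obtain ⟨m, hm, hmnd, hmQ⟩ := hQ.exists_isChain_cons hc
    have hmem : ∀ x ∈ c :: m, x ∈ Q := fun x hx => hmQ ▸ List.mem_toFinset.mpr hx
    obtain ⟨t, ht, htnd, htlen⟩ := ih (l := l ++ c :: m)
      (hl.append hm fun x hx y hy => by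
        obtain rfl : c = y := by simpa using hy
        exact (hcu fun h : c = x => hlQ x (List.mem_of_mem_getLast? hx) (h ▸ hc)).symm)
      (List.nodup_append.mpr ⟨hnd, hmnd, fun x hx y hy hxy => hlQ x hx (hxy ▸ hmem y hy)⟩)
      hQs hdisj fun Q' hQ' x hx => by
        rcases List.mem_append.mp hx with hx | hx
        · exact hlQs Q' hQ' x hx
        · exact Finset.disjoint_left.mp (hQQs Q' hQ') (hmem x hx)
    refine ⟨c :: m ++ t, by simpa using ht, by simpa using htnd, ?_⟩
    rw [List.length_append, htlen, ← List.toFinset_card_of_nodup hmnd, hmQ]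
    simp

theorem exists_isChain_of_cliques {Q₀ : Finset V} (hQ₀ : Γ.IsClique (Q₀ : Set V)) {v : V}
    (hv : v ∈ Q₀) {Qs : List (Finset V)}
    (hQs : ∀ Q ∈ Qs, Γ.IsClique (Q : Set V) ∧ ∃ c ∈ Q, Γ.IsUniversal c)
    (hdisj : (Q₀ :: Qs).Pairwise Disjoint) :
    ∃ t, (v :: t).IsChain Γ.Adj ∧ (v :: t).Nodup ∧
      (v :: t).length = ((Q₀ :: Qs).map Finset.card).sum := by
  obtain ⟨hQ₀Qs, hdisj⟩ := List.pairwise_cons.mp hdisj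
  obtain ⟨l, hl, hlnd, hlQ₀⟩ := hQ₀.exists_isChain_cons hv
  obtain ⟨t, ht, htnd, htlen⟩ := exists_isChain_append_of_cliques hl hlnd hQs hdisj
    fun Q hQ x hx => Finset.disjoint_left.mp (hQ₀Qs Q hQ) (hlQ₀ ▸ List.mem_toFinset.mpr hx)
  refine ⟨l ++ t, ht, htnd, ?_⟩
  rw [List.length_cons, List.length_append, htlen, List.map_cons, List.sum_cons, ← hlQ₀,
    List.toFinset_card_of_nodup hlnd, List.length_cons]
  ring

end SimpleGraph

theorem detourEcc_eq_of_isChain {V : Type} {Γ : SimpleGraph V} {v : V} {m : ℕ}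
    (hpath : ∃ t, (v :: t).IsChain Γ.Adj ∧ (v :: t).Nodup ∧ (v :: t).length = m + 1)
    (hle : ∀ l : List V, l.IsChain Γ.Adj → l.Nodup → l.length ≤ m + 1) :
    detourEcc Γ v = m := by
  obtain ⟨t, ht, htnd, htlen⟩ := hpath
  have hne : v :: t ≠ [] := List.cons_ne_nil _ _
  have hp := (SimpleGraph.Walk.isPath_def (.ofSupport _ hne ht)).mpr
    (by rwa [SimpleGraph.Walk.support_ofSupport])
  have hplen := SimpleGraph.Walk.length_ofSupport hne ht
  refine IsGreatest.csSup_eq ⟨⟨_, .ofSupport _ hne ht, hp,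
    hplen.trans (by rw [htlen, Nat.add_sub_cancel])⟩, ?_⟩
  rintro _ ⟨u, p, hp, rfl⟩
  have := hle p.support p.isChain_adj_support ((SimpleGraph.Walk.isPath_def p).mp hp)
  rwa [SimpleGraph.Walk.length_support, Nat.add_le_add_iff_right] at this

namespace GenDihedral

open Finset SimpleGraph

section

variable {G : Type}

theorem card_genDihedral [Fintype G] :
    Fintype.card (GenDihedral G) = 2 * Fintype.card G :=
  (Fintype.ofEquiv_card _).trans (by simp [mul_comm])

def finsetMk (t : Finset G) (β : Bool) : Finset (GenDihedral G) :=
  t.map ⟨fun g => ⟨g, β⟩, fun _ _ h => congrArg GenDihedral.g h⟩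

theorem mem_finsetMk {t : Finset G} {β : Bool} {x : GenDihedral G} :
    x ∈ finsetMk t β ↔ x.g ∈ t ∧ x.b = β := by
  constructor
  · intro h
    obtain ⟨g, hg, rfl⟩ := Finset.mem_map.mp h
    exact ⟨hg, rfl⟩
  · rintro ⟨hg, hb⟩
    exact Finset.mem_map.mpr ⟨x.g, hg, GenDihedral.ext rfl hb.symm⟩

theorem card_finsetMk (t : Finset G) (β : Bool) : #(finsetMk t β) = #t :=
  card_map _

theorem card_le_card_of_b_eq {s : Finset (GenDihedral G)} {β : Bool} {t : Finset G}
    (h : ∀ x ∈ s, x.b = β ∧ x.g ∈ t) : #s ≤ #t :=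
  card_le_card_of_injOn (·.g) (fun x hx => (h x hx).2)
    fun x hx y hy hxy => GenDihedral.ext hxy ((h x hx).1.trans (h y hy).1.symm)

theorem countP_le_card_of_b_eq [DecidableEq G] {l : List (GenDihedral G)} (hl : l.Nodup)
    {p : GenDihedral G → Bool} {β : Bool} {t : Finset G}
    (h : ∀ x ∈ l, p x → x.b = β ∧ x.g ∈ t) : l.countP p ≤ #t := by
  rw [List.countP_eq_length_filter, ← List.toFinset_card_of_nodup (hl.filter p)]
  exact card_le_card_of_b_eq fun x hx => by
    rw [List.mem_toFinset, List.mem_filter] at hx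
    exact h x hx.1 hx.2

end

section

variable {G : Type} [CommGroup G]

def IsCentral (x : GenDihedral G) : Prop := x.b = false ∧ x.g ^ 2 = 1

instance [DecidableEq G] : DecidablePred (IsCentral (G := G)) :=
  fun _ => inferInstanceAs (Decidable (_ ∧ _))

theorem adj_mk_false_mk_false {a c : G} :
    (commGraph G).Adj ⟨a, false⟩ ⟨c, false⟩ ↔ a ≠ c := by
  simp [commGraph, mul_def, mul_comm]

theorem adj_mk_false_mk_true {a c : G} :
    (commGraph G).Adj ⟨a, false⟩ ⟨c, true⟩ ↔ a ^ 2 = 1 := by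
  have : a * c = c * a⁻¹ ↔ a ^ 2 = 1 := by
    rw [mul_comm a, mul_right_inj, eq_inv_iff_mul_eq_one, sq]
  simp [commGraph, mul_def, this]

theorem adj_mk_true_mk_true {a c : G} :
    (commGraph G).Adj ⟨a, true⟩ ⟨c, true⟩ ↔ a ≠ c ∧ a ^ 2 = c ^ 2 := by
  have : a * c⁻¹ = c * a⁻¹ ↔ a ^ 2 = c ^ 2 := by
    rw [← div_eq_mul_inv, ← div_eq_mul_inv, div_eq_div_iff_mul_eq_mul, sq, sq]
  simp [commGraph, mul_def, this]

theorem isUniversal_of_isCentral {c : GenDihedral G} (hc : IsCentral c) :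
    (commGraph G).IsUniversal c := by
  obtain ⟨c, _⟩ := c
  obtain ⟨rfl, hc⟩ := hc
  rintro ⟨a, _ | _⟩ hx
  · exact adj_mk_false_mk_false.mpr fun h => hx (by rw [h])
  · exact adj_mk_false_mk_true.mpr hc

theorem isCentral_of_adj {x y : GenDihedral G} (hx : x.b = false) (hy : y.b = true)
    (h : (commGraph G).Adj x y) : IsCentral x := by
  obtain ⟨a, _⟩ := x; obtain ⟨c, _⟩ := y
  subst hx hy
  exact ⟨rfl, adj_mk_false_mk_true.mp h⟩

theorem sq_eq_of_adj {x y : GenDihedral G} (hx : x.b = true) (hy : y.b = true)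
    (h : (commGraph G).Adj x y) : x.g ^ 2 = y.g ^ 2 := by
  obtain ⟨a, _⟩ := x; obtain ⟨c, _⟩ := y
  subst hx hy
  exact (adj_mk_true_mk_true.mp h).2

theorem isClique_finsetMk_false (t : Finset G) :
    (commGraph G).IsClique (finsetMk t false : Set (GenDihedral G)) := by
  rintro ⟨a, _⟩ ha ⟨c, _⟩ hc hac
  obtain ⟨-, rfl⟩ := mem_finsetMk.mp ha
  obtain ⟨-, rfl⟩ := mem_finsetMk.mp hc
  exact adj_mk_false_mk_false.mpr fun h => hac (h ▸ rfl)

end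

section

variable {G : Type} [CommGroup G] [Fintype G] [DecidableEq G]

theorem card_filter_sq_eq_sq (a : G) : #{g : G | g ^ 2 = a ^ 2} = #{g : G | g ^ 2 = 1} :=
  MonoidHom.card_fiber_eq_of_mem_range (powMonoidHom 2) ⟨a, rfl⟩ ⟨1, one_pow 2⟩

theorem card_image_sq_mul :
    #(univ.image fun g : G => g ^ 2) * #{g : G | g ^ 2 = 1} = Fintype.card G := by
  have hfiber : ∀ s ∈ univ.image fun g : G => g ^ 2,
      #{g : G | g ^ 2 = s} = #{g : G | g ^ 2 = 1} := by
    rintro _ h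
    obtain ⟨a, -, rfl⟩ := mem_image.mp h
    exact card_filter_sq_eq_sq a
  calc #(univ.image fun g : G => g ^ 2) * #{g : G | g ^ 2 = 1}
      = ∑ s ∈ univ.image (· ^ 2), #{g : G | g ^ 2 = s} := by
        rw [sum_congr rfl hfiber, sum_const, smul_eq_mul]
    _ = Fintype.card G := by
      rw [← card_eq_sum_card_fiberwise fun g _ => mem_image_of_mem _ (mem_univ g), card_univ]

theorem isClique_finsetMk_sq_eq (s : G) :
    (commGraph G).IsClique (finsetMk {g : G | g ^ 2 = s} true : Set (GenDihedral G)) := by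
  rintro ⟨a, _⟩ ha ⟨c, _⟩ hc hac
  obtain ⟨ha, rfl⟩ := mem_finsetMk.mp ha
  obtain ⟨hc, rfl⟩ := mem_finsetMk.mp hc
  simp only [mem_filter, mem_univ, true_and] at ha hc
  exact adj_mk_true_mk_true.mpr ⟨fun h => hac (h ▸ rfl), ha.trans hc.symm⟩

end

section

variable {G : Type} [CommGroup G] [DecidableEq G]

def reflSquares (l : List (GenDihedral G)) : Finset G :=
  ((l.filter (·.b)).map (·.g ^ 2)).toFinset

theorem reflSquares_cons_of_b_false {x : GenDihedral G} (hx : x.b = false)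
    (l : List (GenDihedral G)) : reflSquares (x :: l) = reflSquares l := by
  simp [reflSquares, hx]

theorem reflSquares_cons_of_b_true {x : GenDihedral G} (hx : x.b = true)
    (l : List (GenDihedral G)) : reflSquares (x :: l) = insert (x.g ^ 2) (reflSquares l) := by
  simp [reflSquares, hx]

theorem reflSquares_append (l₁ l₂ : List (GenDihedral G)) :
    reflSquares (l₁ ++ l₂) = reflSquares l₁ ∪ reflSquares l₂ := by
  simp [reflSquares, List.toFinset_append]

theorem reflSquares_reverse (l : List (GenDihedral G)) : reflSquares l.reverse = reflSquares l := by
  ext; simp [reflSquares]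

theorem card_reflSquares_cons_le (x : GenDihedral G) (l : List (GenDihedral G))
    (hl : (x :: l).IsChain (commGraph G).Adj) :
    #(reflSquares (x :: l)) ≤ (x :: l).countP (IsCentral ·) + x.b.toNat := by
  induction l generalizing x with
  | nil =>
    obtain ⟨a, _ | _⟩ := x <;> simp [reflSquares]
  | cons y l ih =>
    obtain ⟨hxy, hl⟩ := List.isChain_cons_cons.mp hl
    have ih := ih y hl
    rw [List.countP_cons]
    cases hx : x.b
    · rw [reflSquares_cons_of_b_false hx]
      by_cases hxc : IsCentral x
      · have := Bool.toNat_le y.b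
        simp only [hxc, decide_true, if_true]
        omega
      · have hy : y.b = false := by
          by_contra hy
          exact hxc (isCentral_of_adj hx (by simpa using hy) hxy)
        simp only [hy, hxc, decide_false] at ih ⊢
        simpa using ih
    · have hxc : ¬IsCentral x := fun h => by simp [h.1] at hx
      rw [reflSquares_cons_of_b_true hx]
      simp only [hxc, decide_false]
      cases hy : y.b
      · have := card_insert_le (x.g ^ 2) (reflSquares (y :: l))
        simp only [hy, Bool.toNat_false, Bool.toNat_true, add_zero] at ih ⊢
        omega
      · rw [insert_eq_of_mem (by simp [reflSquares_cons_of_b_true hy, sq_eq_of_adj hx hy hxy])]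
        simpa [hy] using ih

theorem card_reflSquares_le_countP_add_one {l : List (GenDihedral G)}
    (hl : l.IsChain (commGraph G).Adj) : #(reflSquares l) ≤ l.countP (IsCentral ·) + 1 := by
  cases l with
  | nil => simp [reflSquares]
  | cons x l => exact (card_reflSquares_cons_le x l hl).trans (by simp [Bool.toNat_le])

theorem card_reflSquares_le_countP_of_mem {l : List (GenDihedral G)}
    (hl : l.IsChain (commGraph G).Adj) {w : GenDihedral G} (hw : w ∈ l) (hwb : w.b = false)
    (hwc : ¬IsCentral w) : #(reflSquares l) ≤ l.countP (IsCentral ·) := by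
  obtain ⟨p, s, rfl⟩ := List.append_of_mem hw
  -- Read away from `w`, both halves of the path start at a rotation.
  have hp : (w :: p.reverse).IsChain (commGraph G).Adj := by
    have := List.isChain_reverse.mpr ((hl.prefix (l₁ := p ++ [w]) (by simp)).imp
      fun _ _ h => h.symm)
    simpa using this
  have hs : (w :: s).IsChain (commGraph G).Adj := hl.suffix (by simp)
  have h₁ := card_reflSquares_cons_le w p.reverse hp
  have h₂ := card_reflSquares_cons_le w s hs
  rw [show w :: p.reverse = (p ++ [w]).reverse by simp, reflSquares_reverse,
    List.countP_reverse] at h₁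
  rw [reflSquares_cons_of_b_false hwb] at h₂
  rw [show p ++ w :: s = (p ++ [w]) ++ s by simp, reflSquares_append]
  simp only [hwb, Bool.toNat_false, add_zero, List.countP_cons, hwc, decide_false,
    List.countP_append, List.countP_nil, Bool.false_eq_true, if_false] at h₁ h₂ ⊢
  have := card_union_le (reflSquares (p ++ [w])) (reflSquares s)
  omega

variable [Fintype G]

theorem countP_b_le_mul_card_reflSquares {l : List (GenDihedral G)} (hl : l.Nodup) :
    l.countP (·.b) ≤ #{g : G | g ^ 2 = 1} * #(reflSquares l) := by
  rw [List.countP_eq_length_filter, ← List.toFinset_card_of_nodup (hl.filter _)]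
  refine card_le_mul_card_image_of_maps_to (f := (·.g ^ 2)) ?_ _ ?_
  · intro x hx
    simp only [reflSquares, List.mem_toFinset, List.mem_map]
    exact ⟨x, List.mem_toFinset.mp hx, rfl⟩
  · intro s hs
    obtain ⟨y, -, rfl⟩ := List.mem_map.mp (List.mem_toFinset.mp hs)
    rw [← card_filter_sq_eq_sq y.g]
    refine card_le_card_of_b_eq (β := true) fun x hx => ?_
    simp only [mem_filter, List.mem_toFinset, List.mem_filter] at hx
    simpa using ⟨hx.1.2, hx.2⟩

theorem length_le_of_isChain {l : List (GenDihedral G)} (hl : l.IsChain (commGraph G).Adj)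
    (hnd : l.Nodup) (hz : 2 * #{g : G | g ^ 2 = 1} ≤ Fintype.card G) :
    l.length ≤ Fintype.card G + #{g : G | g ^ 2 = 1} ^ 2 := by
  have hrefl := countP_b_le_mul_card_reflSquares hnd
  have hrot : l.countP (!·.b) ≤ #(univ : Finset G) :=
    countP_le_card_of_b_eq hnd (β := false) fun x _ hx => by simpa using hx
  rw [card_univ] at hrot
  have hcentral : l.countP (IsCentral ·) ≤ #{g : G | g ^ 2 = 1} :=
    countP_le_card_of_b_eq hnd (β := false) fun x _ hx => by
      have hx : IsCentral x := of_decide_eq_true hx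
      exact ⟨hx.1, by simpa using hx.2⟩
  have hlen : l.length = l.countP (!·.b) + l.countP (·.b) := by
    rw [List.length_eq_countP_add_countP (·.b), add_comm]
    simp
  rw [sq]
  by_cases hw : ∃ w ∈ l, w.b = false ∧ ¬IsCentral w
  · obtain ⟨w, hw, hwb, hwc⟩ := hw
    have := card_reflSquares_le_countP_of_mem hl hw hwb hwc
    have := Nat.mul_le_mul_left #{g : G | g ^ 2 = 1} (this.trans hcentral)
    omega
  · push Not at hw
    have hrot' : l.countP (!·.b) = l.countP (IsCentral ·) :=
      List.countP_congr fun x hx => by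
        cases hb : x.b
        · simpa [hb, IsCentral] using (hw x hx hb).2
        · simp [hb, IsCentral]
    have := card_reflSquares_le_countP_add_one hl
    have := Nat.mul_le_mul_left #{g : G | g ^ 2 = 1} (this.trans (Nat.add_le_add_right hcentral 1))
    rw [Nat.mul_succ] at this
    omega

end

section

variable {G : Type} [CommGroup G] [Fintype G] [DecidableEq G]

-- The block of `c ∈ T` is the rotation `(c, 1)` followed by the reflections `(g, -1)` whose
-- square `g²` is the element of `S` paired with `c`.
theorem exists_blocks {T S : Finset G} (hTS : #T = #S) (hT : ∀ c ∈ T, c ^ 2 = 1)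
    (hS : S ⊆ univ.image (· ^ 2)) :
    ∃ Qs : List (Finset (GenDihedral G)),
      (∀ Q ∈ Qs, (commGraph G).IsClique (Q : Set (GenDihedral G)) ∧
        ∃ c ∈ Q, (commGraph G).IsUniversal c) ∧
      Qs.Pairwise Disjoint ∧ (Qs.map card).sum = #T * (#{g : G | g ^ 2 = 1} + 1) ∧
      ∀ Q ∈ Qs, Disjoint (finsetMk (univ \ T) false) Q ∧
        ∀ s ∉ S, Disjoint (finsetMk {g : G | g ^ 2 = s} true) Q := by
  let e := Finset.equivOfCardEq hTS
  let block (c : T) : Finset (GenDihedral G) :=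
    insert ⟨c, false⟩ (finsetMk {g : G | g ^ 2 = e c} true)
  have hmem {c : T} {x : GenDihedral G} :
      x ∈ block c ↔ x = ⟨c, false⟩ ∨ x.g ^ 2 = e c ∧ x.b = true := by
    simp [block, mem_finsetMk]
  refine ⟨T.attach.toList.map block, ?_, ?_, ?_, ?_⟩
  · simp only [List.mem_map, mem_toList, mem_attach, true_and, forall_exists_index,
      forall_apply_eq_imp_iff]
    intro c
    have hc : (commGraph G).IsUniversal ⟨c, false⟩ :=
      isUniversal_of_isCentral ⟨rfl, hT c c.2⟩
    refine ⟨?_, ⟨c, false⟩, mem_insert_self _ _, hc⟩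
    rw [coe_insert]
    exact (isClique_finsetMk_sq_eq _).insert fun y _ hy => hc hy
  · refine List.pairwise_map.mpr
      (T.attach.nodup_toList.imp fun {c c' : T} (hcc' : c ≠ c') => ?_)
    refine disjoint_left.mpr fun x hx hx' => ?_
    rcases hmem.mp hx with rfl | ⟨hx, hxb⟩ <;> rcases hmem.mp hx' with h | ⟨hx', hxb'⟩
    · exact hcc' (Subtype.ext (congrArg GenDihedral.g h))
    · simp at hxb'
    · simp [h] at hxb
    · exact hcc' (e.injective (Subtype.ext (hx.symm.trans hx')))
  · have hcard (c : T) : #(block c) = #{g : G | g ^ 2 = 1} + 1 := by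
      obtain ⟨a, -, ha⟩ := mem_image.mp (hS (e c).2)
      rw [card_insert_of_notMem (by simp [mem_finsetMk]), card_finsetMk, ← ha,
        card_filter_sq_eq_sq]
    rw [List.map_map, sum_map_toList]
    simp only [Function.comp_apply, hcard, sum_const, card_attach, smul_eq_mul]
  · simp only [List.mem_map, mem_toList, mem_attach, true_and, forall_exists_index,
      forall_apply_eq_imp_iff]
    refine fun c => ⟨disjoint_left.mpr fun x hx hxc => ?_,
      fun s hs => disjoint_left.mpr fun x hx hxc => ?_⟩ <;>
      obtain ⟨hxg, hxb⟩ := mem_finsetMk.mp hx <;> rcases hmem.mp hxc with rfl | ⟨hxc, hxb'⟩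
    · simp at hxg
    · simp [hxb] at hxb'
    · simp at hxb
    · simp only [mem_filter, mem_univ, true_and] at hxg
      exact hs (hxg ▸ hxc ▸ (e c).2)

theorem exists_path_from_mk_false {a : G} (ha : a ^ 2 ≠ 1) {k : ℕ}
    (hkq : k ≤ #(univ.image fun g : G => g ^ 2)) (hkz : k ≤ #{g : G | g ^ 2 = 1}) :
    ∃ t, (⟨a, false⟩ :: t).IsChain (commGraph G).Adj ∧ (⟨a, false⟩ :: t).Nodup ∧
      (⟨a, false⟩ :: t).length = Fintype.card G + k * #{g : G | g ^ 2 = 1} := by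
  obtain ⟨T, hT, hTk⟩ := exists_subset_card_eq hkz
  obtain ⟨S, hS, hSk⟩ := exists_subset_card_eq hkq
  obtain ⟨Qs, hQs, hdisj, hsum, hQsdisj⟩ :=
    exists_blocks (hTk.trans hSk.symm) (fun c hc => by simpa using hT hc) hS
  have haT : a ∉ T := fun h => ha (by simpa using hT h)
  obtain ⟨t, ht, htnd, htlen⟩ := exists_isChain_of_cliques (isClique_finsetMk_false (univ \ T))
    (v := ⟨a, false⟩) (mem_finsetMk.mpr ⟨by simpa using haT, rfl⟩) hQs
    (List.pairwise_cons.mpr ⟨fun Q hQ => (hQsdisj Q hQ).1, hdisj⟩)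
  refine ⟨t, ht, htnd, ?_⟩
  have hkn : k ≤ Fintype.card G := hTk ▸ card_le_univ T
  rw [htlen, List.map_cons, List.sum_cons, hsum, card_finsetMk,
    card_sdiff_of_subset (subset_univ T), card_univ, hTk, Nat.mul_succ]
  omega

theorem exists_path_from_mk_true (a : G) {k : ℕ}
    (hkq : k < #(univ.image fun g : G => g ^ 2)) (hkz : k < #{g : G | g ^ 2 = 1}) :
    ∃ t, (⟨a, true⟩ :: t).IsChain (commGraph G).Adj ∧ (⟨a, true⟩ :: t).Nodup ∧
      (⟨a, true⟩ :: t).length = Fintype.card G + (k + 1) * #{g : G | g ^ 2 = 1} := by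
  have h1 : (1 : G) ∈ ({g : G | g ^ 2 = 1} : Finset G) := by simp
  have ha : a ^ 2 ∈ univ.image fun g : G => g ^ 2 := mem_image_of_mem _ (mem_univ a)
  obtain ⟨T, hT, hTk⟩ := exists_subset_card_eq (n := k)
    (s := ({g : G | g ^ 2 = 1} : Finset G).erase 1) (by rw [card_erase_of_mem h1]; omega)
  obtain ⟨S, hS, hSk⟩ := exists_subset_card_eq (n := k)
    (s := (univ.image fun g : G => g ^ 2).erase (a ^ 2)) (by rw [card_erase_of_mem ha]; omega)
  obtain ⟨Qs, hQs, hdisj, hsum, hQsdisj⟩ := exists_blocks (hTk.trans hSk.symm)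
    (fun c hc => by simpa using (mem_erase.mp (hT hc)).2) (hS.trans (erase_subset _ _))
  -- The rotations come last, entered through the central rotation `(1, 1)`.
  have h1T : 1 ∉ T := fun h => (mem_erase.mp (hT h)).1 rfl
  have haS : a ^ 2 ∉ S := fun h => (mem_erase.mp (hS h)).1 rfl
  set R : Finset (GenDihedral G) := finsetMk (univ \ T) false
  have hR : (commGraph G).IsClique (R : Set (GenDihedral G)) ∧
      ∃ c ∈ R, (commGraph G).IsUniversal c :=
    ⟨isClique_finsetMk_false _, ⟨1, false⟩, mem_finsetMk.mpr ⟨by simpa using h1T, rfl⟩,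
      isUniversal_of_isCentral ⟨rfl, one_pow 2⟩⟩
  have hRa : Disjoint (finsetMk {g : G | g ^ 2 = a ^ 2} true) R :=
    disjoint_left.mpr fun x hx hxR => by
      simp [(mem_finsetMk.mp hx).2, R, mem_finsetMk] at hxR
  obtain ⟨t, ht, htnd, htlen⟩ := exists_isChain_of_cliques (isClique_finsetMk_sq_eq (a ^ 2))
    (v := ⟨a, true⟩) (mem_finsetMk.mpr ⟨by simp, rfl⟩) (Qs := Qs ++ [R])
    (List.forall_mem_append.mpr ⟨hQs, List.forall_mem_singleton.mpr hR⟩)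
    (List.pairwise_cons.mpr ⟨List.forall_mem_append.mpr ⟨fun Q hQ => (hQsdisj Q hQ).2 _ haS,
      List.forall_mem_singleton.mpr hRa⟩, List.pairwise_append.mpr ⟨hdisj,
        List.pairwise_singleton _ _, fun Q hQ _ hR' => List.mem_singleton.mp hR' ▸
          (hQsdisj Q hQ).1.symm⟩⟩)
  refine ⟨t, ht, htnd, ?_⟩
  have hkn : k ≤ Fintype.card G := hTk ▸ card_le_univ T
  rw [htlen]
  simp only [List.map_cons, List.map_append, List.map_nil, List.sum_cons, List.sum_append,
    List.sum_nil, hsum, R, card_finsetMk, card_sdiff_of_subset (subset_univ T), card_univ, hTk,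
    card_filter_sq_eq_sq, Nat.mul_succ, Nat.succ_mul]
  omega

theorem exists_path_of_not_isCentral {v : GenDihedral G} (hv : ¬IsCentral v) {k : ℕ}
    (hk : 0 < k) (hkq : k ≤ #(univ.image fun g : G => g ^ 2)) (hkz : k ≤ #{g : G | g ^ 2 = 1}) :
    ∃ t, (v :: t).IsChain (commGraph G).Adj ∧ (v :: t).Nodup ∧
      (v :: t).length = Fintype.card G + k * #{g : G | g ^ 2 = 1} := by
  obtain ⟨a, _ | _⟩ := v
  · exact exists_path_from_mk_false (fun h => hv ⟨rfl, h⟩) hkq hkz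
  · obtain ⟨k, rfl⟩ := Nat.exists_eq_add_one.mpr hk
    exact exists_path_from_mk_true a hkq hkz

end

end GenDihedral

open GenDihedral in
theorem stmt11_general {G : Type} [CommGroup G] [Fintype G] [DecidableEq G]
    (n z : ℕ) (hn : n = Fintype.card G)
    (hz : z = (Finset.univ.filter fun g : G => g ^ 2 = 1).card)
    (v : GenDihedral G) (hv : ¬(v.b = false ∧ v.g ^ 2 = 1)) :
    detourEcc (commGraph G) v =
      if n / z ≤ z then 2 * n - 1 else n + z ^ 2 - 1 := by
  subst hn hz
  set z := (Finset.univ.filter fun g : G => g ^ 2 = 1).card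
  set q := (Finset.univ.image fun g : G => g ^ 2).card
  have hqz : q * z = Fintype.card G := card_image_sq_mul
  have hz0 : 0 < z := Finset.card_pos.mpr ⟨1, by simp⟩
  have hq0 : 0 < q := Finset.card_pos.mpr (Finset.univ_nonempty.image _)
  have hn0 : 0 < q * z := Nat.mul_pos hq0 hz0
  rw [← hqz, Nat.mul_div_cancel _ hz0]
  split_ifs with h
  · have hm : 2 * (q * z) - 1 + 1 = q * z + q * z := by omega
    obtain ⟨t, ht, htnd, htlen⟩ := exists_path_of_not_isCentral hv hq0 le_rfl h
    refine detourEcc_eq_of_isChain ⟨t, ht, htnd, by rw [htlen, hm, hqz]⟩ fun l _ hl => ?_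
    rw [hm, hqz, ← two_mul, ← card_genDihedral]
    exact hl.length_le_card
  · have hm : q * z + z ^ 2 - 1 + 1 = q * z + z ^ 2 := by omega
    obtain ⟨t, ht, htnd, htlen⟩ := exists_path_of_not_isCentral hv hz0 (by omega) le_rfl
    refine detourEcc_eq_of_isChain ⟨t, ht, htnd, by rw [htlen, hm, hqz, sq]⟩ fun l hl hnd => ?_
    rw [hm, hqz]
    refine length_le_of_isChain hl hnd ?_
    rw [← hqz]
    nlinarith

open GenDihedral in
/-- Detour eccentricity of a non-central vertex `v ∉ Z(D(G))` (i.e. `v = (g,1)` with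
`g² ≠ e`, or `v = (g,-1)`) in the commuting graph of a non-abelian `D(G)`: it equals
`2n - 1` if `n/z ≤ z`, and `n + z² - 1` if `n/z > z`, where `n = |G|` and
`z = |{g : g² = e}|`. -/
theorem stmt11 {G : Type} [CommGroup G] [Fintype G] [DecidableEq G]
    (hna : ∃ g : G, g ^ 2 ≠ 1) (n z : ℕ) (hn : n = Fintype.card G)
    (hz : z = (Finset.univ.filter fun g : G => g ^ 2 = 1).card)
    (v : GenDihedral G) (hv : ¬(v.b = false ∧ v.g ^ 2 = 1)) :
    detourEcc (commGraph G) v =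
      if n / z ≤ z then 2 * n - 1 else n + z ^ 2 - 1 :=
  stmt11_general n z hn hz v hv
end

section
/- Let G be a finite abelian group of order n, D(G) its generalized dihedral group (assumed non-abelian), \Gamma the commuting graph of D(G), and z = |{g \in G : g^2 = e}| with z \ge 2. Then the number of resolving sets of \Gamma of minimum cardinality 2n - n/z - 2 equals (n - z) · z^{n/z + 1}. -/
/-- `W` is a resolving set of `Γ` if every pair of distinct vertices is distinguished
by its vector of graph distances to the vertices of `W`. -/
def IsResolvingSet {V : Type} (Γ : SimpleGraph V) (W : Set V) : Prop :=
  ∀ u v : V, u ≠ v → ∃ w ∈ W, Γ.dist u w ≠ Γ.dist v w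

/-- The metric dimension of `Γ`: the minimum cardinality of a resolving set. -/
noncomputable def metricDim {V : Type} (Γ : SimpleGraph V) : ℕ :=
  sInf {k : ℕ | ∃ W : Finset V, IsResolvingSet Γ ↑W ∧ W.card = k}

/-- The number `sᵢ` of resolving sets of `Γ` of cardinality `i` (the coefficient of `xⁱ`
in the resolving polynomial `β(Γ, x) = Σᵢ sᵢ xⁱ`). -/
noncomputable def numResolvingSets {V : Type} (Γ : SimpleGraph V) (i : ℕ) : ℕ :=
  Set.ncard {W : Finset V | IsResolvingSet Γ ↑W ∧ W.card = i}

/-!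
The identity of `D(G)` commutes with everything, so in the commuting graph distinct vertices are
at distance `1` or `2` according to whether they commute. Whether two elements commute depends
only on their classes: non-central rotations, central rotations (`g² = e`), and for each square
`a` the reflections `(g, -1)` with `g² = a`. Two vertices of one class are therefore seen at the
same distance from every other vertex, so a resolving set misses at most one vertex of each class.
Conversely, every reflection class has `z ≥ 2` elements, so a set missing at most one vertex per
class meets every reflection class, and some reflection class separates any two classes. The
minimum resolving sets are thus the complements of the transversals of the `n/z + 2` classes,
which have sizes `n - z`, `z`, and `z` (`n/z` times).
-/

open Finset

theorem SimpleGraph.dist_eq_two_of_forall_adj {V : Type} {Γ : SimpleGraph V} {c : V}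
    (hc : ∀ v, v ≠ c → Γ.Adj c v) {u v : V} (huv : u ≠ v) (hadj : ¬Γ.Adj u v) :
    Γ.dist u v = 2 := by
  have hu : u ≠ c := by rintro rfl; exact hadj (hc v huv.symm)
  have hv : v ≠ c := by rintro rfl; exact hadj (hc u hu).symm
  let p : Γ.Walk u v := .cons (hc u hu).symm (hc v hv).toWalk
  have h_le : Γ.dist u v ≤ 2 := dist_le p
  have h_ne_zero : Γ.dist u v ≠ 0 := p.reachable.dist_eq_zero_iff.not.2 huv
  have h_ne_one : Γ.dist u v ≠ 1 := dist_eq_one_iff_adj.not.2 hadj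
  omega

section ResolvingSets

variable {V K : Type} {Γ : SimpleGraph V} {c : V} (κ : V → K) (R : K → K → Prop)

theorem isResolvingSet_iff_injOn_compl (hc : ∀ v, v ≠ c → Γ.Adj c v)
    (hadj : ∀ u v, u ≠ v → (Γ.Adj u v ↔ R (κ u) (κ v)))
    (hsep : ∀ u v, κ u ≠ κ v →
      ∃ x y, x ≠ y ∧ κ x = κ y ∧ ¬(R (κ u) (κ x) ↔ R (κ v) (κ x)))
    (W : Set V) : IsResolvingSet Γ W ↔ Set.InjOn κ Wᶜ := by
  classical
  have hdist : ∀ u v, u ≠ v → Γ.dist u v = if R (κ u) (κ v) then 1 else 2 := fun u v huv => by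
    rw [← hadj u v huv]
    split_ifs with h
    · exact SimpleGraph.dist_eq_one_iff_adj.2 h
    · exact SimpleGraph.dist_eq_two_of_forall_adj hc huv h
  constructor
  · intro hW u hu v hv hκ
    by_contra huv
    obtain ⟨w, hw, hne⟩ := hW u v huv
    rw [hdist u w (by rintro rfl; exact hu hw), hdist v w (by rintro rfl; exact hv hw), hκ]
      at hne
    exact hne rfl
  intro hinj u v huv
  by_cases hu : u ∈ W
  · refine ⟨u, hu, ?_⟩
    rw [SimpleGraph.dist_self, hdist v u huv.symm]
    split_ifs <;> simp
  by_cases hv : v ∈ W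
  · refine ⟨v, hv, ?_⟩
    rw [SimpleGraph.dist_self, hdist u v huv]
    split_ifs <;> simp
  obtain ⟨x, y, hxy, hκxy, hR⟩ := hsep u v fun h => huv (hinj hu hv h)
  obtain ⟨w, hw, hκw⟩ : ∃ w ∈ W, κ w = κ x := by
    by_cases hx : x ∈ W
    · exact ⟨x, hx, rfl⟩
    by_cases hy : y ∈ W
    · exact ⟨y, hy, hκxy.symm⟩
    exact absurd (hinj hx hy hκxy) hxy
  refine ⟨w, hw, ?_⟩
  rw [hdist u w (by rintro rfl; exact hu hw), hdist v w (by rintro rfl; exact hv hw), hκw]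
  split_ifs <;> tauto

variable [Fintype V] [DecidableEq V] [DecidableEq K]

theorem ncard_injOn_card_eq_card_image :
    {T : Finset V | Set.InjOn κ T ∧ #T = #(univ.image κ)}.ncard
      = ∏ k ∈ univ.image κ, #{v | κ v = k} := by
  set S := univ.image κ
  let span : (∀ k : S, {v // κ v = k}) → Finset V := fun σ => univ.image fun k => (σ k : V)
  have hκσ (σ : ∀ k : S, {v // κ v = k}) {k k' : S} (h : κ (σ k) = κ (σ k')) : k = k' :=
    Subtype.ext (by rw [← (σ k).2, ← (σ k').2, h])
  have hspan_inj : Function.Injective span := by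
    intro σ τ h
    funext k
    have hmem : (σ k : V) ∈ span τ := h ▸ mem_image_of_mem _ (mem_univ k)
    obtain ⟨k', -, hk'⟩ := mem_image.1 hmem
    obtain rfl : k' = k := Subtype.ext (by rw [← (τ k').2, hk', (σ k).2])
    exact Subtype.ext hk'.symm
  have hcard_span (σ) : #(span σ) = #S := by
    rw [card_image_of_injective _ fun k k' h => hκσ σ (congrArg κ h), card_univ,
      Fintype.card_coe]
  have hrange : Set.range span = {T : Finset V | Set.InjOn κ T ∧ #T = #S} := by
    ext T
    constructor
    · rintro ⟨σ, rfl⟩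
      refine ⟨?_, hcard_span σ⟩
      simp only [span, coe_image, coe_univ, Set.image_univ]
      rintro _ ⟨k, rfl⟩ _ ⟨k', rfl⟩ h
      rw [hκσ σ h]
    · rintro ⟨hinj, hT⟩
      have himage : T.image κ = S :=
        eq_of_subset_of_card_le (image_subset_image (subset_univ T))
          (by rw [card_image_of_injOn hinj, hT])
      have hex (k : S) : ∃ t ∈ T, κ t = k := mem_image.1 (himage.symm ▸ k.2)
      choose σ hσT hσκ using hex
      refine ⟨fun k => ⟨σ k, hσκ k⟩, eq_of_subset_of_card_le ?_ ?_⟩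
      · rintro _ hv
        obtain ⟨k, -, rfl⟩ := mem_image.1 hv
        exact hσT k
      · rw [hT, hcard_span]
  rw [← hrange, Set.ncard_range_of_injective hspan_inj, Nat.card_eq_fintype_card,
    Fintype.card_pi, prod_coe_sort S fun k => Fintype.card {v // κ v = k}]
  exact prod_congr rfl fun k _ => Fintype.card_subtype _

theorem numResolvingSets_eq_prod_card_fiber (hc : ∀ v, v ≠ c → Γ.Adj c v)
    (hadj : ∀ u v, u ≠ v → (Γ.Adj u v ↔ R (κ u) (κ v)))
    (hsep : ∀ u v, κ u ≠ κ v →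
      ∃ x y, x ≠ y ∧ κ x = κ y ∧ ¬(R (κ u) (κ x) ↔ R (κ v) (κ x))) :
    numResolvingSets Γ (Fintype.card V - #(univ.image κ))
      = ∏ k ∈ univ.image κ, #{v | κ v = k} := by
  have hS : #(univ.image κ) ≤ Fintype.card V := card_image_le.trans_eq card_univ
  have hset : {W : Finset V | IsResolvingSet Γ W ∧ #W = Fintype.card V - #(univ.image κ)}
      = compl '' {T : Finset V | Set.InjOn κ T ∧ #T = #(univ.image κ)} := by
    ext W
    simp only [isResolvingSet_iff_injOn_compl κ R hc hadj hsep, Set.mem_ofPred_eq,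
      Set.mem_image]
    constructor
    · rintro ⟨hinj, hW⟩
      refine ⟨Wᶜ, ⟨by rwa [coe_compl], ?_⟩, compl_compl W⟩
      rw [card_compl]
      omega
    · rintro ⟨T, ⟨hinj, hT⟩, rfl⟩
      refine ⟨by rwa [coe_compl, compl_compl], ?_⟩
      rw [card_compl]
      omega
  rw [numResolvingSets, hset, Set.ncard_image_of_injective _ compl_injective,
    ncard_injOn_card_eq_card_image]

end ResolvingSets

section SquaringMap

theorem exists_sq_ne {M : Type} [Monoid M] (hM : ∃ g : M, g ^ 2 ≠ 1) (b : M) :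
    ∃ c : M, c ^ 2 ≠ b := by
  obtain ⟨g, hg⟩ := hM
  by_cases hb : b = 1
  · exact ⟨g, hb ▸ hg⟩
  · exact ⟨1, by rwa [one_pow, ne_comm]⟩

variable {G : Type} [CommGroup G]

theorem mul_eq_mul_inv_iff_sq_eq_one_s17 (a b : G) : a * b = b * a⁻¹ ↔ a ^ 2 = 1 := by
  rw [mul_comm b, mul_left_inj, eq_inv_iff_mul_eq_one, sq]

theorem mul_inv_eq_mul_inv_iff_sq_eq_sq_s17 (a b : G) : a * b⁻¹ = b * a⁻¹ ↔ a ^ 2 = b ^ 2 := by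
  rw [← div_eq_mul_inv, ← div_eq_mul_inv, div_eq_div_iff_mul_eq_mul, sq, sq]

theorem card_image_sq_mul_card_sq_eq_one [Fintype G] [DecidableEq G] :
    #(univ.image fun g : G => g ^ 2) * #{g : G | g ^ 2 = 1} = Fintype.card G := by
  rw [← card_univ, card_eq_sum_card_image (· ^ 2) univ, ← smul_eq_mul, ← sum_const]
  refine sum_congr rfl fun a ha => ?_
  obtain ⟨c, -, rfl⟩ := mem_image.1 ha
  exact MonoidHom.card_fiber_eq_of_mem_range (powMonoidHom 2) ⟨1, one_pow 2⟩ ⟨c, rfl⟩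

end SquaringMap

namespace GenDihedral

section Card

variable {G : Type}

def equivProd : GenDihedral G ≃ G × Bool where
  toFun v := (v.g, v.b)
  invFun p := ⟨p.1, p.2⟩

variable [Fintype G]

theorem card_eq : Fintype.card (GenDihedral G) = 2 * Fintype.card G := by
  rw [Fintype.card_congr equivProd, Fintype.card_prod, Fintype.card_bool, mul_comm]

theorem card_filter_eq_add (p : GenDihedral G → Prop) [DecidablePred p] :
    #{v | p v} = #{g | p ⟨g, false⟩} + #{g | p ⟨g, true⟩} := by
  simp only [card_filter, ← sum_add_distrib]
  rw [← Fintype.sum_equiv equivProd.symm _ _ fun _ => rfl, Fintype.sum_prod_type]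
  exact sum_congr rfl fun g _ => (Fintype.sum_bool _).trans (add_comm _ _)

end Card

inductive TwinClass (G : Type)
  | noncentral
  | central
  | reflection (a : G)
  deriving DecidableEq

def TwinClass.Commutes {G : Type} : TwinClass G → TwinClass G → Prop
  | .reflection a, .reflection b => a = b
  | .noncentral, .reflection _ => False
  | .reflection _, .noncentral => False
  | _, _ => True

variable {G : Type} [CommGroup G] [DecidableEq G]

def twinClass : GenDihedral G → TwinClass G
  | ⟨g, false⟩ => if g ^ 2 = 1 then .central else .noncentral
  | ⟨g, true⟩ => .reflection (g ^ 2)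

theorem mul_comm_iff_commutes (u v : GenDihedral G) :
    u * v = v * u ↔ (twinClass u).Commutes (twinClass v) := by
  obtain ⟨a, _ | _⟩ := u <;> obtain ⟨b, _ | _⟩ := v <;>
    simp only [mul_def, twinClass, mk.injEq, Bool.false_eq_true, if_false, if_true,
      Bool.false_xor, Bool.xor_false, and_true]
  · split_ifs <;> simp [TwinClass.Commutes, mul_comm a b]
  · rw [mul_eq_mul_inv_iff_sq_eq_one_s17]
    split_ifs with ha <;> simp [TwinClass.Commutes, ha]
  · rw [eq_comm, mul_eq_mul_inv_iff_sq_eq_one_s17]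
    split_ifs with hb <;> simp [TwinClass.Commutes, hb]
  · rw [mul_inv_eq_mul_inv_iff_sq_eq_sq_s17, TwinClass.Commutes]

theorem exists_commutes_reflection_ne (hna : ∃ g : G, g ^ 2 ≠ 1) {u v : GenDihedral G}
    (h : twinClass u ≠ twinClass v) :
    ∃ c : G, ¬((twinClass u).Commutes (.reflection (c ^ 2)) ↔
      (twinClass v).Commutes (.reflection (c ^ 2))) := by
  obtain ⟨a, _ | _⟩ := u <;> obtain ⟨b, _ | _⟩ := v <;> simp only [twinClass] at h ⊢
  · refine ⟨1, ?_⟩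
    split_ifs at h ⊢ <;> simp_all [TwinClass.Commutes]
  · by_cases ha : a ^ 2 = 1
    · obtain ⟨c, hc⟩ := exists_sq_ne hna (b ^ 2)
      exact ⟨c, by simp [ha, TwinClass.Commutes, hc.symm]⟩
    · exact ⟨b, by simp [ha, TwinClass.Commutes]⟩
  · by_cases hb : b ^ 2 = 1
    · obtain ⟨c, hc⟩ := exists_sq_ne hna (a ^ 2)
      exact ⟨c, by simp [hb, TwinClass.Commutes, hc.symm]⟩
    · exact ⟨a, by simp [hb, TwinClass.Commutes]⟩
  · exact ⟨a, by simpa [TwinClass.Commutes, eq_comm] using h⟩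

/-- The reflection class of `c ^ 2` contains `(c, -1)` and `(c t, -1)`. -/
theorem exists_twins_separating (hna : ∃ g : G, g ^ 2 ≠ 1) {t : G} (ht : t ≠ 1) (ht2 : t ^ 2 = 1)
    {u v : GenDihedral G} (h : twinClass u ≠ twinClass v) :
    ∃ x y, x ≠ y ∧ twinClass x = twinClass y ∧
      ¬((twinClass u).Commutes (twinClass x) ↔ (twinClass v).Commutes (twinClass x)) := by
  obtain ⟨c, hc⟩ := exists_commutes_reflection_ne hna h
  refine ⟨⟨c, true⟩, ⟨c * t, true⟩, by simpa using ht, ?_, hc⟩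
  simp [twinClass, mul_pow, ht2]

variable [Fintype G]

theorem card_twinClass_eq_noncentral :
    #{v : GenDihedral G | twinClass v = .noncentral} = Fintype.card G - #{g : G | g ^ 2 = 1} := by
  rw [card_filter_eq_add, ← card_univ, ← card_filter_add_card_filter_not (s := univ) (· ^ 2 = 1)]
  simp [twinClass]

theorem card_twinClass_eq_central :
    #{v : GenDihedral G | twinClass v = .central} = #{g : G | g ^ 2 = 1} := by
  rw [card_filter_eq_add]
  simp [twinClass]

theorem card_twinClass_eq_reflection (c : G) :
    #{v : GenDihedral G | twinClass v = .reflection (c ^ 2)} = #{g : G | g ^ 2 = 1} := by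
  rw [card_filter_eq_add]
  simpa [twinClass, ite_eq_iff] using
    MonoidHom.card_fiber_eq_of_mem_range (powMonoidHom 2) ⟨c, rfl⟩ ⟨1, one_pow 2⟩

theorem image_twinClass (hna : ∃ g : G, g ^ 2 ≠ 1) :
    univ.image twinClass = insert .noncentral (insert .central
      ((univ.image fun g : G => g ^ 2).image TwinClass.reflection)) := by
  ext k
  simp only [mem_image, mem_insert, mem_univ, true_and]
  constructor
  · rintro ⟨⟨g, _ | _⟩, rfl⟩
    · by_cases hg : g ^ 2 = 1 <;> simp [twinClass, hg]
    · exact Or.inr (Or.inr ⟨g ^ 2, ⟨g, rfl⟩, rfl⟩)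
  · obtain ⟨g, hg⟩ := hna
    rintro (rfl | rfl | ⟨_, ⟨c, rfl⟩, rfl⟩)
    · exact ⟨⟨g, false⟩, by simp [twinClass, hg]⟩
    · exact ⟨⟨1, false⟩, by simp [twinClass]⟩
    · exact ⟨⟨c, true⟩, rfl⟩

theorem card_image_twinClass (hna : ∃ g : G, g ^ 2 ≠ 1) :
    #(univ.image (twinClass (G := G))) = #(univ.image fun g : G => g ^ 2) + 2 := by
  rw [image_twinClass hna, card_insert_of_notMem (by simp), card_insert_of_notMem (by simp),
    card_image_of_injective _ fun _ _ => TwinClass.reflection.inj]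

theorem prod_card_twinClass (hna : ∃ g : G, g ^ 2 ≠ 1) :
    ∏ k ∈ univ.image twinClass, #{v : GenDihedral G | twinClass v = k}
      = (Fintype.card G - #{g : G | g ^ 2 = 1}) *
          #{g : G | g ^ 2 = 1} ^ (#(univ.image fun g : G => g ^ 2) + 1) := by
  rw [image_twinClass hna, prod_insert (by simp), prod_insert (by simp),
    prod_image fun _ _ _ _ => TwinClass.reflection.inj, card_twinClass_eq_noncentral,
    card_twinClass_eq_central, prod_congr rfl fun a ha => ?_, prod_const, pow_succ']
  obtain ⟨c, -, rfl⟩ := mem_image.1 ha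
  exact card_twinClass_eq_reflection c

end GenDihedral

open GenDihedral in
/-- If `z = |{g : g² = e}| ≥ 2`, the number of resolving sets of the commuting graph of
a non-abelian `D(G)` of minimum cardinality `2n - n/z - 2` equals
`(n - z) · z^{n/z + 1}`, where `n = |G|`. -/
theorem stmt17 {G : Type} [CommGroup G] [Fintype G] [DecidableEq G]
    (hna : ∃ g : G, g ^ 2 ≠ 1) (n z : ℕ) (hn : n = Fintype.card G)
    (hz : z = (Finset.univ.filter fun g : G => g ^ 2 = 1).card) (hz2 : 2 ≤ z) :
    numResolvingSets (commGraph G) (2 * n - n / z - 2) = (n - z) * z ^ (n / z + 1) := by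
  subst hn hz
  obtain ⟨t, ht, ht1⟩ := exists_mem_ne hz2 1
  have hsquares : #(univ.image fun g : G => g ^ 2) = Fintype.card G / #{g : G | g ^ 2 = 1} := by
    rw [← card_image_sq_mul_card_sq_eq_one, Nat.mul_div_cancel _ (by omega)]
  have hsize : 2 * Fintype.card G - Fintype.card G / #{g : G | g ^ 2 = 1} - 2
      = Fintype.card (GenDihedral G) - #(univ.image (twinClass (G := G))) := by
    rw [card_eq, card_image_twinClass hna, hsquares, Nat.sub_sub]
  rw [hsize, numResolvingSets_eq_prod_card_fiber (Γ := commGraph G) twinClass TwinClass.Commutes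
      (fun v hv => ⟨hv.symm, by rw [one_mul, mul_one]⟩)
      (fun u v huv => (and_iff_right huv).trans (mul_comm_iff_commutes u v))
      (fun u v h => exists_twins_separating hna ht1 (mem_filter.1 ht).2 h),
    prod_card_twinClass hna, hsquares]
end
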